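/- arXiv:1109.0362 — 2 statements merged into one kernel-verified Lean document; each statement's English description precedes it below -/
import Mathlib

section
/- Let Y₀, Y₁ be real random variables on a common probability space and Δ = Y₁ − Y₀. Then for every δ ∈ ℝ: sup_{y ∈ ℝ} max{F₁(y) − F₀(y − δ), 0} ≤ P(Δ ≤ δ) and P(Δ < δ) ≤ 1 + inf_{y ∈ ℝ} min{F₁(y) − F₀(y − δ), 0} (Makarov bounds), where F_j(y) = P(Y_j ≤ y). -/
open MeasureTheory

/-- Makarov bounds for the CDF of `Δ = Y₁ − Y₀`:
`sup_y max{F₁(y) − F₀(y−δ), 0} ≤ P(Δ ≤ δ)` and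
`P(Δ < δ) ≤ 1 + inf_y min{F₁(y) − F₀(y−δ), 0}`. -/
theorem stmt_6 {Ω : Type*} [MeasureSpace Ω] [IsProbabilityMeasure (volume : Measure Ω)]
    (Y0 Y1 : Ω → ℝ) (hY0 : Measurable Y0) (hY1 : Measurable Y1) (δ : ℝ) :
    (⨆ y : ℝ, max ((volume {ω | Y1 ω ≤ y}).toReal - (volume {ω | Y0 ω ≤ y - δ}).toReal) 0) ≤
        (volume {ω | Y1 ω - Y0 ω ≤ δ}).toReal ∧
      (volume {ω | Y1 ω - Y0 ω < δ}).toReal ≤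
        1 + ⨅ y : ℝ, min ((volume {ω | Y1 ω ≤ y}).toReal - (volume {ω | Y0 ω ≤ y - δ}).toReal) 0 := by
  have hne : ∀ s : Set Ω, volume s ≠ ⊤ := fun s => measure_ne_top _ _
  constructor
  · apply ciSup_le
    intro y
    apply max_le _ ENNReal.toReal_nonneg
    have hsub : {ω | Y1 ω ≤ y} ⊆ {ω | Y1 ω - Y0 ω ≤ δ} ∪ {ω | Y0 ω ≤ y - δ} := by
      intro ω hω
      by_cases h : Y1 ω - Y0 ω ≤ δ
      · exact Or.inl h
      · right
        simp only [Set.mem_setOf_eq] at *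
        linarith
    have h1 : volume {ω | Y1 ω ≤ y} ≤
        volume {ω | Y1 ω - Y0 ω ≤ δ} + volume {ω | Y0 ω ≤ y - δ} :=
      (measure_mono hsub).trans (measure_union_le _ _)
    have h2 : (volume {ω | Y1 ω ≤ y}).toReal ≤
        (volume {ω | Y1 ω - Y0 ω ≤ δ}).toReal + (volume {ω | Y0 ω ≤ y - δ}).toReal := by
      rw [← ENNReal.toReal_add (hne _) (hne _)]
      exact ENNReal.toReal_le_toReal (hne _) (by simp [hne]) |>.mpr h1
    linarith
  · rw [← sub_le_iff_le_add']
    apply le_ciInf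
    intro y
    apply le_min
    · have hmeas : MeasurableSet {ω | Y1 ω ≤ y} := measurableSet_le hY1 measurable_const
      have hsub : {ω | Y1 ω - Y0 ω < δ} ∩ {ω | Y0 ω ≤ y - δ} ⊆ {ω | Y1 ω ≤ y} := by
        intro ω ⟨h1, h2⟩
        simp only [Set.mem_setOf_eq] at *
        linarith
      have key := measure_union_add_inter (μ := (volume : Measure Ω)) {ω | Y1 ω - Y0 ω < δ}
        (measurableSet_le hY0 measurable_const : MeasurableSet {ω | Y0 ω ≤ y - δ})
      have h1 : volume {ω | Y1 ω - Y0 ω < δ} + volume {ω | Y0 ω ≤ y - δ} ≤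
          1 + volume {ω | Y1 ω ≤ y} := by
        rw [← key]
        exact add_le_add prob_le_one (measure_mono hsub)
      have h2 : (volume {ω | Y1 ω - Y0 ω < δ}).toReal + (volume {ω | Y0 ω ≤ y - δ}).toReal ≤
          1 + (volume {ω | Y1 ω ≤ y}).toReal := by
        have := ENNReal.toReal_le_toReal (by simp [hne]) (by simp [hne]) |>.mpr h1
        rw [ENNReal.toReal_add (hne _) (hne _)] at this
        rwa [ENNReal.toReal_add (by simp) (hne _), ENNReal.toReal_one] at this
      linarith
    · have : (volume {ω | Y1 ω - Y0 ω < δ}).toReal ≤ 1 := by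
        rw [← ENNReal.toReal_one]
        exact ENNReal.toReal_le_toReal (hne _) (by simp) |>.mpr prob_le_one
      linarith
end

section
/- Let f₁, f₂, g₁, g₂: ℝ → ℂ be measurable with |f₁|, |f₂| ≤ 1 (characteristic-function-type bounds not required), g₂ ≠ 0. Define ψ(t) := (1/|g₂(t)|) min(1, r/|g₂(t)|) for r > 0. If for all t, |ĝ₂(t) − g₂(t)| ≤ C r where ĝ₂ is an approximation of g₂, and R(t) := 1{|ĝ₂(t)| > r}/ĝ₂(t) − 1/g₂(t), then |R(t)| ≤ C' ψ(t) for a constant C' depending only on C. In particular: (i) if |g₂(t)| < 2r then |g₂(t)||R(t)| ≤ 1 + r^{-1}|ĝ₂(t) − g₂(t)|; (ii) if |g₂(t)| ≥ 2r and |ĝ₂(t)| ≤ r then |ĝ₂(t) − g₂(t)| ≥ |g₂(t)|/2. -/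
/-!
Write `δ = ‖x - y‖` and `E` for the error of the trimmed reciprocal of `x` as an estimate of
`y⁻¹`. If `x` is discarded (`‖x‖ ≤ r`) then `‖y‖ ‖E‖ = 1` and `‖y‖ ≤ r + δ`; otherwise
`‖y‖ ‖E‖ = δ / ‖x‖` with `‖x‖ > r` and `‖y‖ ≤ ‖x‖ + δ`. Either way `‖y‖ ‖E‖ ≤ 1 + δ / r` and
`‖y‖² ‖E‖ ≤ r (1 + δ / r)²`; as `δ ≤ C r`, these bound the two branches of the minimum in `ψ`,
with constant `(1 + C)²`.
-/

/-- The error of the trimmed reciprocal: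
`R(t) = 1{|ĝ₂(t)| > r}/ĝ₂(t) − 1/g₂(t)`. -/
noncomputable def Rtrim (ghat g2 : ℝ → ℂ) (r : ℝ) (t : ℝ) : ℂ :=
  (if r < ‖ghat t‖ then (ghat t)⁻¹ else 0) - (g2 t)⁻¹

section TrimmedInv

variable {𝕜 : Type*} [NormedDivisionRing 𝕜]

noncomputable def trimmedInv (r : ℝ) (x : 𝕜) : 𝕜 :=
  if r < ‖x‖ then x⁻¹ else 0

lemma trimmedInv_of_lt {r : ℝ} {x : 𝕜} (h : r < ‖x‖) : trimmedInv r x = x⁻¹ := if_pos h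

lemma trimmedInv_of_le {r : ℝ} {x : 𝕜} (h : ‖x‖ ≤ r) : trimmedInv r x = 0 := if_neg h.not_gt

lemma norm_mul_norm_inv_sub_inv {x y : 𝕜} (hx : x ≠ 0) (hy : y ≠ 0) :
    ‖y‖ * ‖x⁻¹ - y⁻¹‖ = ‖x - y‖ / ‖x‖ := by
  rw [inv_sub_inv' hx hy, norm_mul, norm_mul, norm_inv, norm_inv, norm_sub_rev y x]
  field_simp [norm_ne_zero_iff.mpr hy]

lemma norm_mul_norm_trimmedInv_sub_inv_le {r : ℝ} (hr : 0 < r) (x : 𝕜) {y : 𝕜} (hy : y ≠ 0) :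
    ‖y‖ * ‖trimmedInv r x - y⁻¹‖ ≤ 1 + r⁻¹ * ‖x - y‖ := by
  rcases lt_or_ge r ‖x‖ with hrx | hxr
  · have hx : x ≠ 0 := norm_pos_iff.mp (hr.trans hrx)
    rw [trimmedInv_of_lt hrx, norm_mul_norm_inv_sub_inv hx hy, div_eq_mul_inv, mul_comm r⁻¹]
    have : ‖x - y‖ * ‖x‖⁻¹ ≤ ‖x - y‖ * r⁻¹ := by gcongr
    linarith
  · rw [trimmedInv_of_le hxr, zero_sub, norm_neg, norm_inv,
      mul_inv_cancel₀ (norm_ne_zero_iff.mpr hy)]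
    have : 0 ≤ r⁻¹ * ‖x - y‖ := by positivity
    linarith

lemma norm_sq_mul_norm_trimmedInv_sub_inv_le {r : ℝ} (hr : 0 < r) (x : 𝕜) {y : 𝕜} (hy : y ≠ 0) :
    ‖y‖ ^ 2 * ‖trimmedInv r x - y⁻¹‖ ≤ r * (1 + r⁻¹ * ‖x - y‖) ^ 2 := by
  have hy_le : ‖y‖ ≤ ‖x‖ + ‖x - y‖ := norm_sub_rev y x ▸ norm_le_insert' y x
  set δ := ‖x - y‖
  have hδ : 0 ≤ δ := norm_nonneg _
  have hexpand : r * (1 + r⁻¹ * δ) ^ 2 = r + 2 * δ + δ * (δ * r⁻¹) := by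
    field_simp
    ring
  have hδr : 0 ≤ δ * (δ * r⁻¹) := by positivity
  rw [hexpand]
  rcases lt_or_ge r ‖x‖ with hrx | hxr
  · have hx_pos : 0 < ‖x‖ := hr.trans hrx
    rw [trimmedInv_of_lt hrx, pow_two, mul_assoc,
      norm_mul_norm_inv_sub_inv (norm_pos_iff.mp hx_pos) hy]
    have hquot : δ / ‖x‖ ≤ δ * r⁻¹ := by
      rw [div_eq_mul_inv]
      gcongr
    calc ‖y‖ * (δ / ‖x‖) ≤ (‖x‖ + δ) * (δ / ‖x‖) := by gcongr
      _ = δ + δ * (δ / ‖x‖) := by field_simp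
      _ ≤ δ + δ * (δ * r⁻¹) := by gcongr
      _ ≤ r + 2 * δ + δ * (δ * r⁻¹) := by linarith
  · rw [trimmedInv_of_le hxr, zero_sub, norm_neg, norm_inv, pow_two, mul_assoc,
      mul_inv_cancel₀ (norm_ne_zero_iff.mpr hy), mul_one]
    linarith

end TrimmedInv

lemma le_mul_inv_mul_min_of_mul_le {a e K r : ℝ} (ha : 0 < a) (he : 0 ≤ e)
    (h₁ : a * e ≤ K) (h₂ : a ^ 2 * e ≤ K * r) : e ≤ K * (a⁻¹ * min 1 (r / a)) := by
  have hK : 0 ≤ K := (mul_nonneg ha.le he).trans h₁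
  rw [← mul_assoc, mul_comm K, mul_assoc, ← div_eq_inv_mul, le_div_iff₀' ha,
    mul_min_of_nonneg _ _ hK, mul_one]
  refine le_min h₁ ?_
  rw [mul_div_assoc', le_div_iff₀ ha]
  linarith

lemma half_norm_le_norm_sub {E : Type*} [SeminormedAddCommGroup E] {x y : E} {r : ℝ}
    (hy : 2 * r ≤ ‖y‖) (hx : ‖x‖ ≤ r) : ‖y‖ / 2 ≤ ‖x - y‖ := by
  have := norm_sub_norm_le y x
  rw [norm_sub_rev] at this
  linarith

/-- deterministic core of Neumann's deconvolution lemma.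
With `ψ(t) = |g₂(t)|⁻¹ min(1, r/|g₂(t)|)` and `|ĝ₂ − g₂| ≤ C r` everywhere,
`|R(t)| ≤ C' ψ(t)` for a constant `C'` depending only on `C`; moreover
(i) if `|g₂(t)| < 2r` then `|g₂(t)||R(t)| ≤ 1 + r⁻¹|ĝ₂(t) − g₂(t)|`, and
(ii) if `|g₂(t)| ≥ 2r` and `|ĝ₂(t)| ≤ r` then `|ĝ₂(t) − g₂(t)| ≥ |g₂(t)|/2`. -/
theorem stmt_10 (g2 ghat : ℝ → ℂ) (r C : ℝ) (hr : 0 < r) (hC : 0 < C)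
    (hg2 : ∀ t, g2 t ≠ 0)
    (happrox : ∀ t, ‖ghat t - g2 t‖ ≤ C * r) :
    (∃ C' > 0, ∀ t : ℝ,
      ‖Rtrim ghat g2 r t‖ ≤
        C' * ((‖g2 t‖)⁻¹ * min 1 (r / ‖g2 t‖))) ∧
    (∀ t : ℝ, ‖g2 t‖ < 2 * r →
      ‖g2 t‖ * ‖Rtrim ghat g2 r t‖ ≤
        1 + r⁻¹ * ‖ghat t - g2 t‖) ∧
    (∀ t : ℝ, 2 * r ≤ ‖g2 t‖ → ‖ghat t‖ ≤ r →
      ‖g2 t‖ / 2 ≤ ‖ghat t - g2 t‖) := by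
  have hRtrim : ∀ t, Rtrim ghat g2 r t = trimmedInv r (ghat t) - (g2 t)⁻¹ := fun _ => rfl
  refine ⟨⟨(1 + C) ^ 2, by positivity, fun t => ?_⟩,
    fun t _ => hRtrim t ▸ norm_mul_norm_trimmedInv_sub_inv_le hr _ (hg2 t),
    fun t hy hx => half_norm_le_norm_sub hy hx⟩
  have hρ : 1 + r⁻¹ * ‖ghat t - g2 t‖ ≤ 1 + C := by
    have : r⁻¹ * ‖ghat t - g2 t‖ ≤ C := by
      rw [inv_mul_le_iff₀ hr, mul_comm]
      exact happrox t
    linarith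
  rw [hRtrim]
  refine le_mul_inv_mul_min_of_mul_le (norm_pos_iff.mpr (hg2 t)) (norm_nonneg _) ?_ ?_
  · calc _ ≤ 1 + r⁻¹ * ‖ghat t - g2 t‖ := norm_mul_norm_trimmedInv_sub_inv_le hr _ (hg2 t)
      _ ≤ 1 + C := hρ
      _ ≤ (1 + C) ^ 2 := by nlinarith
  · calc _ ≤ r * (1 + r⁻¹ * ‖ghat t - g2 t‖) ^ 2 :=
          norm_sq_mul_norm_trimmedInv_sub_inv_le hr _ (hg2 t)
      _ ≤ r * (1 + C) ^ 2 := by gcongr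
      _ = (1 + C) ^ 2 * r := mul_comm _ _
end
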